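/- Let G be a graph of order n whose diameter is not equal to 3 (G connected with diam(G) ≤ 2 or diam(G) ≥ 4, or G disconnected). Then the convexity number of the complementary prism G∘Ḡ is at least n. -/

import Mathlib

/-!
If `diam G ≤ 2`, a shortest path between two vertices of the copy of `G` has length at most 2,
and it cannot leave the copy: a vertex `v̄` of `Ḡ` has only one neighbour `v` in `G`. So the
copy of `G` is a proper convex set with `n` vertices. Otherwise `diam G ≥ 4` (possibly `∞`), and
then `diam Ḡ ≤ 2`: for vertices `x, y` at distance at least 4 in `G`, every pair `a, b` that is
not already adjacent in `Ḡ` is adjacent in `G`, so one of `x, y` is adjacent in `G` to neither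
`a` nor `b` and is a common neighbour of both in `Ḡ`. The same argument then applies to the
copy of `Ḡ`.
-/

open SimpleGraph

/-- The complementary prism `G ∘ Ḡ`: left copies (`Sum.inl`) form `G`,
right copies (`Sum.inr`) form the complement `Gᶜ`, and each `inl v` is
matched to `inr v`. -/
def compPrism {V : Type*} (G : SimpleGraph V) : SimpleGraph (V ⊕ V) where
  Adj x y :=
    match x, y with
    | Sum.inl a, Sum.inl b => G.Adj a b
    | Sum.inr a, Sum.inr b => Gᶜ.Adj a b
    | Sum.inl a, Sum.inr b => a = b
    | Sum.inr a, Sum.inl b => a = b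
  symm := by
    constructor
    rintro (a | a) (b | b) h <;> simp_all [compl_adj, adj_comm, eq_comm]
  loopless := by
    constructor
    rintro (a | a) h <;> simp_all

/-- `v` lies on some shortest `u`-`w` path in `G`. -/
def inInterval {V : Type*} (G : SimpleGraph V) (u w v : V) : Prop :=
  ∃ p : G.Walk u w, p.IsPath ∧ p.length = G.dist u w ∧ v ∈ p.support

/-- A set is geodesically convex if it contains every vertex on any shortest
path between two of its vertices. -/
def IsGeodConvex {V : Type*} (G : SimpleGraph V) (S : Set V) : Prop :=
  ∀ u ∈ S, ∀ w ∈ S, ∀ v, inInterval G u w v → v ∈ S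

/-- The geodesic convex hull of a set of vertices. -/
def geodHull {V : Type*} (G : SimpleGraph V) (S : Set V) : Set V :=
  ⋂₀ {T | S ⊆ T ∧ IsGeodConvex G T}

/-- The convexity number: the maximum cardinality of a proper convex set. -/
noncomputable def convexityNumber {V : Type*} (G : SimpleGraph V) : ℕ :=
  sSup {n | ∃ S : Set V, IsGeodConvex G S ∧ S ≠ Set.univ ∧ S.ncard = n}

section

variable {V W : Type*}

namespace SimpleGraph

lemma dist_map_le_of_edist_le {G : SimpleGraph V} {H : SimpleGraph W} (f : G →g H) {u v : V}
    {k : ℕ} (h : G.edist u v ≤ k) : H.dist (f u) (f v) ≤ k := by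
  obtain ⟨p, hp⟩ := exists_walk_of_edist_ne_top (ne_top_of_le_ne_top (ENat.natCast_ne_top k) h)
  calc H.dist (f u) (f v) ≤ (p.map f).length := dist_le _
    _ = p.length := Walk.length_map f p
    _ ≤ k := by exact_mod_cast hp ▸ h

lemma compl_adj_of_one_lt_edist {G : SimpleGraph V} {u v : V} (h : 1 < G.edist u v) :
    Gᶜ.Adj u v := by
  rw [← not_le, edist_le_one_iff_adj_or_eq, not_or] at h
  exact (compl_adj G u v).mpr ⟨h.2, h.1⟩

lemma edist_le_three_of_edist_le_one {G : SimpleGraph V} {a b x y : V} (hab : G.edist a b ≤ 1)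
    (hx : G.edist a x ≤ 1 ∨ G.edist b x ≤ 1) (hy : G.edist a y ≤ 1 ∨ G.edist b y ≤ 1) :
    G.edist x y ≤ 3 := by
  have hab' : ∀ p ∈ ({a, b} : Set V), ∀ q ∈ ({a, b} : Set V), G.edist p q ≤ 1 := by
    rintro p (rfl | rfl) q (rfl | rfl)
    exacts [by simp, hab, edist_comm ▸ hab, by simp]
  obtain ⟨p, hp, hpx⟩ : ∃ p ∈ ({a, b} : Set V), G.edist p x ≤ 1 := by
    rcases hx with hx | hx
    exacts [⟨a, by simp, hx⟩, ⟨b, by simp, hx⟩]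
  obtain ⟨q, hq, hqy⟩ : ∃ q ∈ ({a, b} : Set V), G.edist q y ≤ 1 := by
    rcases hy with hy | hy
    exacts [⟨a, by simp, hy⟩, ⟨b, by simp, hy⟩]
  calc G.edist x y ≤ G.edist x p + G.edist p q + G.edist q y :=
        SimpleGraph.edist_triangle.trans (add_le_add_left SimpleGraph.edist_triangle _)
    _ ≤ 1 + 1 + 1 := by gcongr; exacts [edist_comm ▸ hpx, hab' p hp q hq]
    _ = 3 := by norm_num

lemma ediam_compl_le_two {G : SimpleGraph V} (h : 3 < G.ediam) : Gᶜ.ediam ≤ 2 := by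
  obtain ⟨x, y, hxy⟩ : ∃ x y, ¬G.edist x y ≤ 3 := by
    simpa only [ediam_le_iff, not_forall] using not_le.mpr h
  refine ediam_le_iff.mpr fun a b => ?_
  rcases le_or_gt (G.edist a b) 1 with hab | hab
  · obtain ⟨c, hac, hbc⟩ : ∃ c, 1 < G.edist a c ∧ 1 < G.edist b c := by
      by_contra! hnear
      exact hxy (edist_le_three_of_edist_le_one hab ((le_or_gt _ _).imp_right (hnear x))
        ((le_or_gt _ _).imp_right (hnear y)))
    calc Gᶜ.edist a b ≤ Gᶜ.edist a c + Gᶜ.edist c b := SimpleGraph.edist_triangle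
      _ = 2 := by
        rw [edist_eq_one_iff_adj.mpr (compl_adj_of_one_lt_edist hac),
          edist_eq_one_iff_adj.mpr (compl_adj_of_one_lt_edist hbc).symm, one_add_one_eq_two]
  · exact (edist_eq_one_iff_adj.mpr (compl_adj_of_one_lt_edist hab)).trans_le one_le_two

end SimpleGraph

lemma isGeodConvex_of_dist_le_two {H : SimpleGraph W} {S : Set W}
    (hdist : ∀ u ∈ S, ∀ w ∈ S, H.dist u w ≤ 2)
    (hnbr : ∀ v ∉ S, ∀ u ∈ S, ∀ w ∈ S, H.Adj v u → H.Adj v w → u = w) :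
    IsGeodConvex H S := by
  rintro u hu w hw v ⟨p, -, hlen, hv⟩
  have hle : p.length ≤ 2 := hlen ▸ hdist u hu w hw
  rcases p with _ | ⟨h₁, _ | ⟨h₂, _ | ⟨_, _⟩⟩⟩
  · simp_all
  · simp only [Walk.support_cons, Walk.support_nil, List.mem_cons, List.not_mem_nil,
      or_false] at hv
    rcases hv with rfl | rfl <;> assumption
  · simp only [Walk.support_cons, Walk.support_nil, List.mem_cons, List.not_mem_nil,
      or_false] at hv
    rcases hv with rfl | rfl | rfl
    · exact hu
    · by_contra hm
      obtain rfl := hnbr v hm u hu w hw h₁.symm h₂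
      simp at hlen
    · exact hw
  · simp only [Walk.length_cons] at hle
    omega

lemma le_convexityNumber [Finite W] {H : SimpleGraph W} {S : Set W} (hS : IsGeodConvex H S)
    (hne : S ≠ Set.univ) : S.ncard ≤ convexityNumber H :=
  le_csSup ⟨Nat.card W, by rintro _ ⟨T, -, -, rfl⟩; exact Set.ncard_le_card T⟩ ⟨S, hS, hne, rfl⟩

namespace compPrism

variable (G : SimpleGraph V)

def inlHom : G →g compPrism G := ⟨Sum.inl, id⟩

def inrHom : Gᶜ →g compPrism G := ⟨Sum.inr, id⟩

variable {G}

lemma isGeodConvex_range_inl (h : G.ediam ≤ 2) :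
    IsGeodConvex (compPrism G) (Set.range Sum.inl) := by
  refine isGeodConvex_of_dist_le_two ?_ ?_
  · rintro _ ⟨u, rfl⟩ _ ⟨w, rfl⟩
    exact dist_map_le_of_edist_le (inlHom G) (edist_le_ediam.trans h)
  · rintro (v | v) hv _ ⟨u, rfl⟩ _ ⟨w, rfl⟩ hu hw
    exacts [absurd ⟨v, rfl⟩ hv, congrArg _ ((hu : v = u).symm.trans hw)]

lemma isGeodConvex_range_inr (h : Gᶜ.ediam ≤ 2) :
    IsGeodConvex (compPrism G) (Set.range Sum.inr) := by
  refine isGeodConvex_of_dist_le_two ?_ ?_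
  · rintro _ ⟨u, rfl⟩ _ ⟨w, rfl⟩
    exact dist_map_le_of_edist_le (inrHom G) (edist_le_ediam.trans h)
  · rintro (v | v) hv _ ⟨u, rfl⟩ _ ⟨w, rfl⟩ hu hw
    exacts [congrArg _ ((hu : v = u).symm.trans hw), absurd ⟨v, rfl⟩ hv]

end compPrism

end

theorem stmt6 {V : Type*} [Fintype V] [Nonempty V] (G : SimpleGraph V)
    (h : G.ediam ≠ 3) :
    Fintype.card V ≤ convexityNumber (compPrism G) := by
  obtain ⟨v⟩ := ‹Nonempty V›
  have hcard : ∀ {f : V → V ⊕ V}, f.Injective → (Set.range f).ncard = Fintype.card V :=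
    fun hf => (Set.ncard_range_of_injective hf).trans Nat.card_eq_fintype_card
  rcases le_or_gt G.ediam 2 with h2 | h2
  · have hne : Set.range (Sum.inl : V → V ⊕ V) ≠ Set.univ :=
      (Set.ne_univ_iff_exists_notMem _).mpr ⟨Sum.inr v, by simp⟩
    exact hcard Sum.inl_injective ▸ le_convexityNumber (compPrism.isGeodConvex_range_inl h2) hne
  · have h3 : 3 < G.ediam := (Order.add_one_le_of_lt h2).lt_of_ne' h
    have hne : Set.range (Sum.inr : V → V ⊕ V) ≠ Set.univ :=
      (Set.ne_univ_iff_exists_notMem _).mpr ⟨Sum.inl v, by simp⟩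
    exact hcard Sum.inr_injective ▸
      le_convexityNumber (compPrism.isGeodConvex_range_inr (ediam_compl_le_two h3)) hne
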